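/- arXiv:2101.00705 — 5 statements merged into one kernel-verified Lean document; each statement's English description precedes it below -/
import Mathlib

section
/- Let $u \in (0,1)$. Define $D \subseteq [0,1]$ to be the set of numbers of the form $y = \sum_{l=1}^m u^{n_l}(1-u)^{l-1}$ where $m \in \mathbb{N}$, $n_1 \le n_2 \le \cdots \le n_{m-1}$ with $n_l \in \mathbb{N} \cup \{\infty\}$ for $l < m$, and $n_m \in \mathbb{Z}_{\ge 0} \cup \{\infty\}$ with $n_{m-1} \le n_m + 1$ (interpreting $u^\infty = 0$; for $m=1$ only $n_1 \in \mathbb{Z}_{\ge 0}\cup\{\infty\}$ is required). Then $D$ is dense in $[0,1]$. -/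
/-!
Write `x ∈ (0, u ^ s]` as `x = u ^ (N + 1) + (1 - u) x'` with `N ≥ s` and `x' ∈ (0, u ^ N]`, where
`u ^ (N + 1) < x ≤ u ^ N`. Iterating this greedy step `m` times produces a sum
`∑_{l<m} u ^ {n_l} (1 - u) ^ l` with nondecreasing exponents `n_l > s` that undershoots `x` by at
most `(1 - u) ^ m u ^ s`; such sums lie in `D`, so `(0, 1] ⊆ closure D`.
-/

open Set

/-- `u ^ n` for an extended natural exponent, with `u ^ ∞ = 0`. -/
noncomputable def upow (u : ℝ) : ℕ∞ → ℝ
  | ⊤ => 0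
  | (k : ℕ) => u ^ k

/-- The set `D` of admissible sums `∑_{l=1}^m u^{n_l} (1-u)^{l-1}`. -/
def admissibleSet (u : ℝ) : Set ℝ :=
  {y | ∃ (m : ℕ) (_ : 1 ≤ m) (n : Fin m → ℕ∞),
    (∀ i : Fin m, (i : ℕ) + 1 < m → 1 ≤ n i) ∧
    (∀ i j : Fin m, i ≤ j → (j : ℕ) + 1 < m → n i ≤ n j) ∧
    (∀ i j : Fin m, (i : ℕ) + 2 = m → (j : ℕ) + 1 = m → n i ≤ n j + 1) ∧
    y = ∑ l : Fin m, upow u (n l) * (1 - u) ^ (l : ℕ)}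

noncomputable def expSum (u : ℝ) {k : ℕ} (n : Fin k → ℕ) : ℝ :=
  ∑ l, u ^ n l * (1 - u) ^ (l : ℕ)

lemma expSum_cons (u : ℝ) {k : ℕ} (N : ℕ) (n : Fin k → ℕ) :
    expSum u (Fin.cons N n : Fin (k + 1) → ℕ) = u ^ N + (1 - u) * expSum u n := by
  simp only [expSum, Fin.sum_univ_succ, Fin.cons_zero, Fin.cons_succ, Fin.val_zero, Fin.val_succ,
    pow_zero, mul_one, Finset.mul_sum, pow_succ]
  congr 1
  exact Finset.sum_congr rfl fun _ _ => by ring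

lemma Fin.monotone_cons {α : Type*} [Preorder α] {k : ℕ} {a : α} {f : Fin k → α}
    (hf : Monotone f) (ha : ∀ i, a ≤ f i) : Monotone (Fin.cons a f : Fin (k + 1) → α) :=
  monotone_iff_forall_lt.2 <| (Fin.liftFun_cons (· ≤ ·)).2 ⟨ha, monotone_iff_forall_lt.1 hf⟩

/-- Padding with a final exponent `∞` turns any such sum into an element of `D`, even the empty
one. -/
lemma expSum_mem_admissibleSet (u : ℝ) {k : ℕ} {n : Fin k → ℕ} (hn : Monotone n)
    (hpos : ∀ i, 0 < n i) : expSum u n ∈ admissibleSet u := by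
  refine ⟨k + 1, by omega, fun i => if h : (i : ℕ) < k then (n ⟨i, h⟩ : ℕ∞) else ⊤,
    fun i hi => ?_, fun i j hij hj => ?_, fun i j _ hj => ?_, ?_⟩
  · dsimp only
    rw [dif_pos (by omega)]
    exact_mod_cast hpos _
  · dsimp only
    rw [dif_pos (by omega), dif_pos (by omega)]
    exact_mod_cast hn (Fin.mk_le_mk.2 hij)
  · simp [dif_neg (show ¬ (j : ℕ) < k by omega)]
  · have htop : upow u ⊤ = 0 := rfl
    have hcoe (m : ℕ) : upow u m = u ^ m := rfl
    simp [Fin.sum_univ_castSucc, expSum, htop, hcoe]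

/-- One greedy step. Taking `u ^ (N + 1) < x` strictly keeps the remainder `x'` positive, so the
expansion can always be continued. -/
lemma exists_eq_pow_add_mul {u x : ℝ} {s : ℕ} (hu0 : 0 < u) (hu1 : u < 1) (hx : 0 < x)
    (hxs : x ≤ u ^ s) :
    ∃ N x', s ≤ N ∧ 0 < x' ∧ x' ≤ u ^ N ∧ x = u ^ (N + 1) + (1 - u) * x' := by
  have hus : 0 < u ^ s := pow_pos hu0 s
  obtain ⟨n, hlt, hle⟩ := exists_nat_pow_near_of_lt_one (div_pos hx hus)
    ((div_le_one hus).2 hxs) hu0 hu1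
  rw [lt_div_iff₀ hus, div_le_iff₀ hus, ← pow_add] at *
  have h1u : 0 < 1 - u := by linarith
  refine ⟨n + s, (x - u ^ (n + s + 1)) / (1 - u), by omega, ?_, ?_, by field_simp; ring⟩
  · exact div_pos (by rw [add_right_comm]; linarith) h1u
  · rw [div_le_iff₀ h1u, pow_succ]
    linarith

lemma exists_expSum_approx {u : ℝ} (hu0 : 0 < u) (hu1 : u < 1) (m : ℕ) :
    ∀ (s : ℕ) (x : ℝ), 0 < x → x ≤ u ^ s → ∃ (k : ℕ) (n : Fin k → ℕ), Monotone n ∧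
      (∀ i, s < n i) ∧ 0 < x - expSum u n ∧ x - expSum u n ≤ (1 - u) ^ m * u ^ s := by
  induction m with
  | zero =>
    intro s x hx hxs
    exact ⟨0, Fin.elim0, fun i => i.elim0, fun i => i.elim0, by simpa [expSum], by simpa [expSum]⟩
  | succ m ih =>
    intro s x hx hxs
    obtain ⟨N, x', hsN, hx'0, hx'N, rfl⟩ := exists_eq_pow_add_mul hu0 hu1 hx hxs
    obtain ⟨k, n, hn, hNn, herr0, herr⟩ := ih N x' hx'0 hx'N
    have h1u : 0 < 1 - u := by linarith
    have hrem : u ^ (N + 1) + (1 - u) * x' - expSum u (Fin.cons (N + 1) n : Fin (k + 1) → ℕ) =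
        (1 - u) * (x' - expSum u n) := by
      rw [expSum_cons]; ring
    have hs : ∀ i, s < (Fin.cons (N + 1) n : Fin (k + 1) → ℕ) i :=
      Fin.cases (by simp only [Fin.cons_zero]; omega) fun i => by
        simp only [Fin.cons_succ]; have := hNn i; omega
    refine ⟨k + 1, Fin.cons (N + 1) n, Fin.monotone_cons hn hNn, hs, hrem ▸ mul_pos h1u herr0, ?_⟩
    calc u ^ (N + 1) + (1 - u) * x' - expSum u (Fin.cons (N + 1) n : Fin (k + 1) → ℕ)
        = (1 - u) * (x' - expSum u n) := hrem
      _ ≤ (1 - u) * ((1 - u) ^ m * u ^ N) := by gcongr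
      _ ≤ (1 - u) * ((1 - u) ^ m * u ^ s) := by
        have := pow_le_pow_of_le_one hu0.le hu1.le hsN
        gcongr
      _ = (1 - u) ^ (m + 1) * u ^ s := by ring

lemma Ioc_subset_closure_admissibleSet {u : ℝ} (hu0 : 0 < u) (hu1 : u < 1) :
    Ioc 0 1 ⊆ closure (admissibleSet u) := by
  intro x ⟨hx0, hx1⟩
  rw [Metric.mem_closure_iff]
  intro ε hε
  obtain ⟨m, hm⟩ := exists_pow_lt_of_lt_one hε (by linarith : 1 - u < 1)
  obtain ⟨k, n, hn, hpos, herr0, herr⟩ :=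
    exists_expSum_approx hu0 hu1 m 0 x hx0 (by rwa [pow_zero])
  rw [pow_zero, mul_one] at herr
  refine ⟨expSum u n, expSum_mem_admissibleSet u hn hpos, ?_⟩
  rw [Real.dist_eq, abs_of_pos herr0]
  linarith

/-- for `u ∈ (0,1)` the set `D` is dense in `[0,1]`. -/
theorem stmt9 (u : ℝ) (hu : u ∈ Set.Ioo (0:ℝ) 1) :
    Set.Icc (0:ℝ) 1 ⊆ closure (admissibleSet u) := by
  rw [← closure_Ioc zero_ne_one]
  exact closure_minimal (Ioc_subset_closure_admissibleSet hu.1 hu.2) isClosed_closure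
end

section
/- Let $u, p \in (0,1)$ and let $G_u$ be the CDF of the self-similar measure for the IFS $S_0(x)=u+(1-u)x$, $S_1(x)=ux$ with weights $(1-p,p)$. Then for any $m \ge 1$ and finite exponents $n_1 \le \cdots \le n_{m-1}$, $n_{m-1} \le n_m + 1$ (with $n_l \ge 1$ for $l < m$, $n_m \ge 0$), we have $G_u\left(\sum_{l=1}^m u^{n_l}(1-u)^{l-1}\right) = \sum_{l=1}^m p^{n_l}(1-p)^{l-1}$. -/
open MeasureTheory Set

private lemma stmt10_bound (u : ℝ) (hu : u ∈ Set.Ioo (0:ℝ) 1) :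
    ∀ m : ℕ, ∀ n : ℕ → ℕ, (∀ i, i + 1 < m → 1 ≤ n i) →
      ∑ l ∈ Finset.range m, u ^ (n l) * (1 - u) ^ l ≤ 1 := by
  intro m
  induction m with
  | zero => intro n _; simp
  | succ m ih =>
    intro n h1
    rw [Finset.sum_range_succ']
    have hinner : ∑ l ∈ Finset.range m, u ^ (n (l + 1)) * (1 - u) ^ (l + 1)
        = (1 - u) * ∑ l ∈ Finset.range m, u ^ (n (l + 1)) * (1 - u) ^ l := by
      rw [Finset.mul_sum]
      exact Finset.sum_congr rfl (fun l _ => by ring)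
    have hI := ih (fun l => n (l + 1)) (fun i hi => h1 (i + 1) (by omega))
    rcases Nat.eq_zero_or_pos m with hm | hm
    · subst hm; simpa using pow_le_one₀ hu.1.le hu.2.le
    · have hn0 : 1 ≤ n 0 := h1 0 (by omega)
      have hu0 : u ^ (n 0) ≤ u := by
        calc u ^ (n 0) ≤ u ^ 1 := pow_le_pow_of_le_one hu.1.le hu.2.le hn0
        _ = u := pow_one u
      have hS0 : (0:ℝ) ≤ ∑ l ∈ Finset.range m, u ^ (n (l + 1)) * (1 - u) ^ l :=
        Finset.sum_nonneg fun l _ =>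
          mul_nonneg (pow_nonneg hu.1.le _) (pow_nonneg (by linarith [hu.2]) _)
      rw [hinner]
      simp only [pow_zero, mul_one]
      nlinarith [hu.1, hu.2]

private lemma stmt10_aux (u p : ℝ) (hu : u ∈ Set.Ioo (0:ℝ) 1) (hp : p ∈ Set.Ioo (0:ℝ) 1)
    (G : ℝ → ℝ) (hG0 : G 0 = 0) (hG1 : G 1 = 1)
    (hEq1 : ∀ z ∈ Set.Icc (0:ℝ) 1, G (u * z) = p * G z)
    (hEq0 : ∀ z ∈ Set.Icc (0:ℝ) 1, G (u + (1 - u) * z) = p + (1 - p) * G z) :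
    ∀ m : ℕ, ∀ n : ℕ → ℕ, (∀ i, i + 1 < m → 1 ≤ n i) →
      (∀ i j, i ≤ j → j + 1 < m → n i ≤ n j) →
      (∀ i j, i + 2 = m → j + 1 = m → n i ≤ n j + 1) →
      G (∑ l ∈ Finset.range m, u ^ (n l) * (1 - u) ^ l)
        = ∑ l ∈ Finset.range m, p ^ (n l) * (1 - p) ^ l := by
  have hpow : ∀ k : ℕ, ∀ z ∈ Set.Icc (0:ℝ) 1, G (u ^ k * z) = p ^ k * G z := by
    intro k
    induction k with
    | zero => intro z _; simp
    | succ k ih =>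
      intro z hz
      have hmem : u ^ k * z ∈ Set.Icc (0:ℝ) 1 :=
        ⟨mul_nonneg (pow_nonneg hu.1.le k) hz.1,
         mul_le_one₀ (pow_le_one₀ hu.1.le hu.2.le) hz.1 hz.2⟩
      have e : u ^ (k + 1) * z = u * (u ^ k * z) := by ring
      rw [e, hEq1 _ hmem, ih z hz]; ring
  intro m
  induction m with
  | zero => intro n _ _ _; simpa using hG0
  | succ m ih =>
    intro n h1 h2 h3
    rcases Nat.eq_zero_or_pos m with hm | hm
    · subst hm
      have h := hpow (n 0) 1 ⟨zero_le_one, le_refl 1⟩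
      rw [mul_one, hG1, mul_one] at h
      simpa using h
    · set k := n 0 with hkdef
      have hk1 : 1 ≤ k := h1 0 (by omega)
      have hkle : ∀ l, l < m → k ≤ n (l + 1) + 1 := by
        intro l hl
        rcases Nat.lt_or_ge (l + 1) m with h | h
        · have := h2 0 (l + 1) (Nat.zero_le _) (by omega)
          omega
        · have hlm : l + 1 = m := by omega
          have ha := h3 (m - 1) m (by omega) (by omega)
          have hb : n 0 ≤ n (m - 1) := h2 0 (m - 1) (Nat.zero_le _) (by omega)
          rw [hlm]; omega
      set N : ℕ → ℕ := fun l => n (l + 1) + 1 - k with hNdef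
      set z : ℝ := ∑ l ∈ Finset.range m, u ^ (N l) * (1 - u) ^ l with hzdef
      have hz0 : 0 ≤ z := Finset.sum_nonneg fun l _ =>
        mul_nonneg (pow_nonneg hu.1.le _) (pow_nonneg (by linarith [hu.2]) _)
      have hz1 : z ≤ 1 := by
        apply stmt10_bound u hu m N
        intro i hi
        have := h2 0 (i + 1) (Nat.zero_le _) (by omega)
        simp only [hNdef]; omega
      have hzmem : z ∈ Set.Icc (0:ℝ) 1 := ⟨hz0, hz1⟩
      have hwmem : u + (1 - u) * z ∈ Set.Icc (0:ℝ) 1 :=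
        ⟨by nlinarith [hu.1, hu.2], by nlinarith [hu.1, hu.2]⟩
      have hsumu : ∑ l ∈ Finset.range (m + 1), u ^ (n l) * (1 - u) ^ l
          = u ^ (k - 1) * (u + (1 - u) * z) := by
        rw [Finset.sum_range_succ']
        have hterm : ∀ l ∈ Finset.range m, u ^ (n (l + 1)) * (1 - u) ^ (l + 1)
            = (u ^ (k - 1) * (1 - u)) * (u ^ (N l) * (1 - u) ^ l) := by
          intro l hl
          have hkl := hkle l (Finset.mem_range.mp hl)
          have he : u ^ (n (l + 1)) = u ^ (k - 1) * u ^ (N l) := by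
            rw [← pow_add]; congr 1; simp only [hNdef]; omega
          rw [he]; ring
        rw [Finset.sum_congr rfl hterm, ← Finset.mul_sum, ← hzdef]
        have h0 : u ^ (n 0) = u ^ (k - 1) * u := by
          rw [← pow_succ]; congr 1; omega
        rw [h0]; ring
      have hsump : ∑ l ∈ Finset.range (m + 1), p ^ (n l) * (1 - p) ^ l
          = p ^ (k - 1) * (p + (1 - p) * ∑ l ∈ Finset.range m, p ^ (N l) * (1 - p) ^ l) := by
        rw [Finset.sum_range_succ']
        have hterm : ∀ l ∈ Finset.range m, p ^ (n (l + 1)) * (1 - p) ^ (l + 1)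
            = (p ^ (k - 1) * (1 - p)) * (p ^ (N l) * (1 - p) ^ l) := by
          intro l hl
          have hkl := hkle l (Finset.mem_range.mp hl)
          have he : p ^ (n (l + 1)) = p ^ (k - 1) * p ^ (N l) := by
            rw [← pow_add]; congr 1; simp only [hNdef]; omega
          rw [he]; ring
        rw [Finset.sum_congr rfl hterm, ← Finset.mul_sum]
        have h0 : p ^ (n 0) = p ^ (k - 1) * p := by
          rw [← pow_succ]; congr 1; omega
        rw [h0]; ring
      have hIH := ih N
        (fun i hi => by
          have := h2 0 (i + 1) (Nat.zero_le _) (by omega)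
          simp only [hNdef]; omega)
        (fun i j hij hj => by
          have := h2 (i + 1) (j + 1) (by omega) (by omega)
          simp only [hNdef]; omega)
        (fun i j hi hj => by
          have := h3 (i + 1) (j + 1) (by omega) (by omega)
          simp only [hNdef]; omega)
      rw [hsumu, hpow (k - 1) _ hwmem, hEq0 z hzmem, hIH, hsump]

/-- explicit values of the CDF `G_u` of the self-similar measure at
admissible points with finite exponents:
`G_u(∑_{l=1}^m u^{n_l}(1-u)^{l-1}) = ∑_{l=1}^m p^{n_l}(1-p)^{l-1}`. -/
theorem stmt10 (u p : ℝ) (hu : u ∈ Set.Ioo (0:ℝ) 1) (hp : p ∈ Set.Ioo (0:ℝ) 1)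
    (μ : Measure ℝ) [IsProbabilityMeasure μ] (hsupp : μ (Set.Icc (0:ℝ) 1)ᶜ = 0)
    (hss : μ = ENNReal.ofReal (1 - p) • μ.map (fun x => u + (1 - u) * x)
          + ENNReal.ofReal p • μ.map (fun x => u * x))
    (G : ℝ → ℝ) (hG : ∀ z, G z = (μ (Set.Icc 0 z)).toReal)
    (m : ℕ) (hm : 1 ≤ m) (n : Fin m → ℕ)
    (h1 : ∀ i : Fin m, (i : ℕ) + 1 < m → 1 ≤ n i)
    (hmono : ∀ i j : Fin m, i ≤ j → (j : ℕ) + 1 < m → n i ≤ n j)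
    (hlast : ∀ i j : Fin m, (i : ℕ) + 2 = m → (j : ℕ) + 1 = m → n i ≤ n j + 1) :
    G (∑ l : Fin m, u ^ (n l) * (1 - u) ^ (l : ℕ))
      = ∑ l : Fin m, p ^ (n l) * (1 - p) ^ (l : ℕ) := by
  have hf0 : Measurable (fun x : ℝ => u + (1 - u) * x) := by fun_prop
  have hf1 : Measurable (fun x : ℝ => u * x) := by fun_prop
  have key : ∀ A : Set ℝ, MeasurableSet A →
      μ A = ENNReal.ofReal (1 - p) * μ ((fun x => u + (1 - u) * x) ⁻¹' A)
          + ENNReal.ofReal p * μ ((fun x => u * x) ⁻¹' A) := by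
    intro A hA
    conv_lhs => rw [hss]
    rw [Measure.add_apply, Measure.smul_apply, Measure.smul_apply,
      Measure.map_apply hf0 hA, Measure.map_apply hf1 hA, smul_eq_mul, smul_eq_mul]
  -- μ {0} = 0
  have μ0 : μ {(0:ℝ)} = 0 := by
    have h := key {0} (measurableSet_singleton 0)
    have e1 : (fun x : ℝ => u * x) ⁻¹' {0} = {0} := by
      ext x
      simp [mul_eq_zero, hu.1.ne']
    have e0 : μ ((fun x : ℝ => u + (1 - u) * x) ⁻¹' {0}) = 0 := by
      apply measure_mono_null _ hsupp
      intro x hx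
      simp only [mem_preimage, mem_singleton_iff] at hx
      simp only [mem_compl_iff, mem_Icc, not_and, not_le]
      intro h0
      nlinarith [hu.1, hu.2]
    rw [e1, e0, mul_zero, zero_add] at h
    have hfin : μ {(0:ℝ)} ≠ ⊤ := measure_ne_top μ _
    have ht : (μ {(0:ℝ)}).toReal = p * (μ {(0:ℝ)}).toReal := by
      conv_lhs => rw [h]
      rw [ENNReal.toReal_mul, ENNReal.toReal_ofReal hp.1.le]
    have h2 : (1 - p) * (μ {(0:ℝ)}).toReal = 0 := by linear_combination ht
    have h3 : (μ {(0:ℝ)}).toReal = 0 := by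
      rcases mul_eq_zero.mp h2 with h | h
      · exfalso; linarith [hp.2]
      · exact h
    rcases (ENNReal.toReal_eq_zero_iff _).mp h3 with h | h
    · exact h
    · exact absurd h hfin
  have hIio : μ (Set.Iio (0:ℝ)) = 0 := by
    apply measure_mono_null _ hsupp
    intro x hx
    simp only [mem_Iio] at hx
    simp only [mem_compl_iff, mem_Icc, not_and, not_le]
    intro h0; linarith
  have hIic : μ (Set.Iic (0:ℝ)) = 0 := by
    have e : Set.Iic (0:ℝ) = Set.Iio 0 ∪ {0} := by
      ext x; simp [le_iff_lt_or_eq]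
    rw [e]
    exact measure_union_null hIio μ0
  have hIcc : μ (Set.Icc (0:ℝ) 1) = 1 := by
    have h := measure_add_measure_compl (μ := μ) (measurableSet_Icc : MeasurableSet (Set.Icc (0:ℝ) 1))
    rw [hsupp, add_zero, measure_univ] at h
    exact h
  have hG0 : G 0 = 0 := by
    rw [hG, Set.Icc_self, μ0, ENNReal.toReal_zero]
  have hG1 : G 1 = 1 := by
    rw [hG, hIcc, ENNReal.toReal_one]
  have hEq1 : ∀ z ∈ Set.Icc (0:ℝ) 1, G (u * z) = p * G z := by
    intro z hz
    have h := key (Set.Icc 0 (u * z)) measurableSet_Icc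
    have e1 : (fun x : ℝ => u * x) ⁻¹' Set.Icc 0 (u * z) = Set.Icc 0 z := by
      ext x
      simp only [mem_preimage, mem_Icc]
      constructor
      · rintro ⟨ha, hb⟩
        constructor
        · nlinarith [hu.1]
        · nlinarith [hu.1]
      · rintro ⟨ha, hb⟩
        exact ⟨mul_nonneg hu.1.le ha, mul_le_mul_of_nonneg_left hb hu.1.le⟩
    have e0 : μ ((fun x : ℝ => u + (1 - u) * x) ⁻¹' Set.Icc 0 (u * z)) = 0 := by
      apply measure_mono_null _ hIic
      intro x hx
      simp only [mem_preimage, mem_Icc] at hx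
      simp only [mem_Iic]
      nlinarith [hu.1, hu.2, hz.2]
    rw [e1, e0, mul_zero, zero_add] at h
    rw [hG, hG, h, ENNReal.toReal_mul, ENNReal.toReal_ofReal hp.1.le]
  have hEq0 : ∀ z ∈ Set.Icc (0:ℝ) 1, G (u + (1 - u) * z) = p + (1 - p) * G z := by
    intro z hz
    have h := key (Set.Icc 0 (u + (1 - u) * z)) measurableSet_Icc
    have e1 : μ ((fun x : ℝ => u * x) ⁻¹' Set.Icc 0 (u + (1 - u) * z)) = 1 := by
      apply le_antisymm prob_le_one
      have hsub : Set.Icc (0:ℝ) 1 ⊆ (fun x : ℝ => u * x) ⁻¹' Set.Icc 0 (u + (1 - u) * z) := by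
        intro x hx
        simp only [mem_Icc] at hx
        simp only [mem_preimage, mem_Icc]
        constructor
        · exact mul_nonneg hu.1.le hx.1
        · nlinarith [hu.1, hu.2, hz.1]
      calc (1:ENNReal) = μ (Set.Icc 0 1) := hIcc.symm
        _ ≤ _ := measure_mono hsub
    have e0 : μ ((fun x : ℝ => u + (1 - u) * x) ⁻¹' Set.Icc 0 (u + (1 - u) * z))
        = μ (Set.Icc 0 z) := by
      apply le_antisymm
      · have hsub : (fun x : ℝ => u + (1 - u) * x) ⁻¹' Set.Icc 0 (u + (1 - u) * z)
            ⊆ Set.Icc 0 z ∪ Set.Iio 0 := by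
          intro x hx
          simp only [mem_preimage, mem_Icc] at hx
          rcases lt_or_ge x 0 with hx0 | hx0
          · exact Or.inr hx0
          · left
            refine ⟨hx0, ?_⟩
            nlinarith [hu.2]
        calc μ _ ≤ μ (Set.Icc 0 z ∪ Set.Iio 0) := measure_mono hsub
          _ ≤ μ (Set.Icc 0 z) + μ (Set.Iio 0) := measure_union_le _ _
          _ = μ (Set.Icc 0 z) := by rw [hIio, add_zero]
      · apply measure_mono
        intro x hx
        simp only [mem_Icc] at hx
        simp only [mem_preimage, mem_Icc]
        constructor
        · nlinarith [hu.1, hu.2]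
        · nlinarith [hu.2]
    rw [e0, e1, mul_one] at h
    rw [hG, hG, h, ENNReal.toReal_add (ENNReal.mul_ne_top ENNReal.ofReal_ne_top
      (measure_ne_top μ _)) ENNReal.ofReal_ne_top, ENNReal.toReal_mul,
      ENNReal.toReal_ofReal (by linarith [hp.2] : (0:ℝ) ≤ 1 - p),
      ENNReal.toReal_ofReal hp.1.le]
    ring
  -- convert Fin sums to range sums
  set N : ℕ → ℕ := fun l => if h : l < m then n ⟨l, h⟩ else 0 with hN
  have hNn : ∀ i : Fin m, N (i : ℕ) = n i := by
    intro i
    simp [hN, i.isLt]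
  have hL : ∑ l : Fin m, u ^ (n l) * (1 - u) ^ (l : ℕ)
      = ∑ l ∈ Finset.range m, u ^ (N l) * (1 - u) ^ l := by
    rw [← Fin.sum_univ_eq_sum_range (fun l => u ^ (N l) * (1 - u) ^ l) m]
    exact Finset.sum_congr rfl (fun i _ => by rw [hNn])
  have hR : ∑ l : Fin m, p ^ (n l) * (1 - p) ^ (l : ℕ)
      = ∑ l ∈ Finset.range m, p ^ (N l) * (1 - p) ^ l := by
    rw [← Fin.sum_univ_eq_sum_range (fun l => p ^ (N l) * (1 - p) ^ l) m]
    exact Finset.sum_congr rfl (fun i _ => by rw [hNn])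
  rw [hL, hR]
  apply stmt10_aux u p hu hp G hG0 hG1 hEq1 hEq0 m N
  · intro i hi
    have hilt : i < m := by omega
    have : N i = n ⟨i, hilt⟩ := by simp [hN, hilt]
    rw [this]
    exact h1 ⟨i, hilt⟩ hi
  · intro i j hij hj
    have hilt : i < m := by omega
    have hjlt : j < m := by omega
    have hi' : N i = n ⟨i, hilt⟩ := by simp [hN, hilt]
    have hj' : N j = n ⟨j, hjlt⟩ := by simp [hN, hjlt]
    rw [hi', hj']
    exact hmono ⟨i, hilt⟩ ⟨j, hjlt⟩ (Fin.mk_le_mk.mpr hij) hj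
  · intro i j hi hj
    have hilt : i < m := by omega
    have hjlt : j < m := by omega
    have hi' : N i = n ⟨i, hilt⟩ := by simp [hN, hilt]
    have hj' : N j = n ⟨j, hjlt⟩ := by simp [hN, hjlt]
    rw [hi', hj']
    exact hlast ⟨i, hilt⟩ ⟨j, hjlt⟩ hi hj
end

section
/- Let $u, p \in (0,1)$ with $u \ne p$. Then the self-similar measure $\mu_u$ for the IFS $S_0(x) = u+(1-u)x$, $S_1(x)=ux$ with weights $(1-p,p)$ is singular with respect to Lebesgue measure on $[0,1]$. -/
/-!
Read a point `x ∈ [0,1]` in the "base" given by the two branches of the IFS: the map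
`T = expandingMap u`, which inverts `S₁` on `[0,u)` and `S₀` on `[u,1]`, shifts the expansion, and
`x` uses the branch `S₁` at step `k` iff `T^k x < u`. Self-similarity of `μ` implies that `T`
preserves `μ` and that the current digit is independent of all later ones, with `μ [0,u) = p`. The digit indicators are
therefore pairwise independent and identically distributed, so by the strong law of large numbers
the frequency of the digit `S₁` is `p` for `μ`-a.e. `x`. Lebesgue measure on `[0,1]` is the
self-similar measure with weights `(1-u, u)`, so for it the frequency is `u` almost everywhere.
For `u ≠ p` the two sets of points are disjoint.
-/

open MeasureTheory Set ProbabilityTheory Filter Topology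

namespace MeasureTheory.MeasurePreserving

theorem identDistrib_comp {α β γ : Type*} [MeasurableSpace α] [MeasurableSpace β]
    [MeasurableSpace γ] {μa : Measure α} {μb : Measure β} {f : α → β} {g : β → γ}
    (hf : MeasurePreserving f μa μb) (hg : Measurable g) : IdentDistrib (g ∘ f) g μa μb where
  aemeasurable_fst := (hg.comp hf.measurable).aemeasurable
  aemeasurable_snd := hg.aemeasurable
  map_eq := by rw [← Measure.map_map hg hf.measurable, hf.map_eq]

variable {α : Type*} [MeasurableSpace α] {μ : Measure α} [IsProbabilityMeasure μ]
  {T : α → α} {E : Set α}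

theorem indepSet_preimage_iterate (hT : MeasurePreserving T μ μ) (hE : MeasurableSet E)
    (hmix : ∀ A, MeasurableSet A → μ (E ∩ T ⁻¹' A) = μ E * μ A) {i j : ℕ} (hij : i < j) :
    IndepSet (T^[i] ⁻¹' E) (T^[j] ⁻¹' E) μ := by
  obtain ⟨k, rfl⟩ := Nat.exists_eq_add_of_lt hij
  have hEk : MeasurableSet (T ⁻¹' (T^[k] ⁻¹' E)) := hT.measurable (hT.measurable.iterate k hE)
  have hj : T^[i + k + 1] ⁻¹' E = T^[i] ⁻¹' (T ⁻¹' (T^[k] ⁻¹' E)) := by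
    rw [show i + k + 1 = k + 1 + i by omega, Function.iterate_add, Function.iterate_succ,
      preimage_comp, preimage_comp]
  have hTi := hT.iterate i
  rw [indepSet_iff_measure_inter_eq_mul (hT.measurable.iterate i hE)
    (hT.measurable.iterate _ hE) μ, hj, ← preimage_inter,
    hTi.measure_preimage (hE.inter hEk).nullMeasurableSet,
    hTi.measure_preimage hE.nullMeasurableSet, hTi.measure_preimage hEk.nullMeasurableSet,
    hmix _ (hT.measurable.iterate k hE),
    hT.measure_preimage (hT.measurable.iterate k hE).nullMeasurableSet,
    (hT.iterate k).measure_preimage hE.nullMeasurableSet]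

theorem indepFun_indicator_comp_iterate (hT : MeasurePreserving T μ μ) (hE : MeasurableSet E)
    (hmix : ∀ A, MeasurableSet A → μ (E ∩ T ⁻¹' A) = μ E * μ A) :
    Pairwise fun i j =>
      IndepFun (E.indicator (1 : α → ℝ) ∘ T^[i]) (E.indicator (1 : α → ℝ) ∘ T^[j]) μ := by
  intro i j hij
  have hset : IndepSet (T^[i] ⁻¹' E) (T^[j] ⁻¹' E) μ := by
    rcases hij.lt_or_gt with h | h
    · exact hT.indepSet_preimage_iterate hE hmix h
    · exact (hT.indepSet_preimage_iterate hE hmix h).symm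
  rw [IndepFun_iff_Indep]
  exact indep_of_indep_of_le_left
    (indep_of_indep_of_le_right ((IndepSet_iff_Indep _ _ _).1 hset)
      (MeasurableSpace.comap_indicator_const_le_generateFrom_singleton _ (1 : ℝ)))
    (MeasurableSpace.comap_indicator_const_le_generateFrom_singleton _ (1 : ℝ))

theorem ae_tendsto_birkhoffAverage_indicator (hT : MeasurePreserving T μ μ)
    (hE : MeasurableSet E) (hmix : ∀ A, MeasurableSet A → μ (E ∩ T ⁻¹' A) = μ E * μ A) :
    ∀ᵐ x ∂μ, Tendsto (fun n => birkhoffAverage ℝ T (E.indicator 1) n x) atTop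
      (𝓝 (μ.real E)) := by
  have hg : Measurable (E.indicator (1 : α → ℝ)) := measurable_const.indicator hE
  have := strong_law_ae_real _ ((integrable_const (1 : ℝ)).indicator hE)
    (hT.indepFun_indicator_comp_iterate hE hmix) (fun i => (hT.iterate i).identDistrib_comp hg)
  rw [Function.iterate_zero, Function.comp_id, integral_indicator_one hE] at this
  filter_upwards [this] with x hx
  simpa only [birkhoffAverage, birkhoffSum, smul_eq_mul, div_eq_inv_mul, Function.comp_apply]
    using hx

end MeasureTheory.MeasurePreserving

theorem Real.map_volume_affine {a b : ℝ} (hb : b ≠ 0) :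
    volume.map (fun x : ℝ => a + b * x) = ENNReal.ofReal |b⁻¹| • volume := by
  have : (fun x : ℝ => a + b * x) = (a + ·) ∘ (b * ·) := rfl
  rw [this, ← Measure.map_map (measurable_const_add a) (measurable_const_mul b),
    Real.map_volume_mul_left hb, Measure.map_smul, map_add_left_eq_self]

theorem Real.map_volume_restrict_Icc_zero_one_affine {a b : ℝ} (hb : 0 < b) :
    (volume.restrict (Icc 0 1)).map (fun x : ℝ => a + b * x) =
      ENNReal.ofReal b⁻¹ • volume.restrict (Icc a (a + b)) := by
  have hf : MeasurableEmbedding (fun x : ℝ => a + b * x) :=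
    ((Homeomorph.mulLeft₀ b hb.ne').trans (Homeomorph.addLeft a)).measurableEmbedding
  have hpre : (fun x : ℝ => a + b * x) ⁻¹' Icc a (a + b) = Icc 0 1 := by
    ext x
    simp [mul_nonneg_iff_of_pos_left hb, mul_le_iff_le_one_right hb]
  rw [← hpre, ← hf.restrict_map, Real.map_volume_affine hb.ne', Measure.restrict_smul,
    abs_of_pos (inv_pos.2 hb)]

namespace AffineIFS

def IsSelfSimilar (u p : ℝ) (μ : Measure ℝ) : Prop :=
  μ = ENNReal.ofReal (1 - p) • μ.map (fun x => u + (1 - u) * x)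
    + ENNReal.ofReal p • μ.map (fun x => u * x)

noncomputable def expandingMap (u x : ℝ) : ℝ := if x < u then x / u else (x - u) / (1 - u)

theorem measurable_expandingMap (u : ℝ) : Measurable (expandingMap u) :=
  Measurable.ite measurableSet_Iio (measurable_id.div_const u)
    ((measurable_id.sub_const u).div_const (1 - u))

variable {u p : ℝ} {μ : Measure ℝ}

theorem IsSelfSimilar.measure_eq (h : IsSelfSimilar u p μ) {B : Set ℝ} (hB : MeasurableSet B) :
    μ B = ENNReal.ofReal (1 - p) * μ ((fun x => u + (1 - u) * x) ⁻¹' B)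
      + ENNReal.ofReal p * μ ((fun x => u * x) ⁻¹' B) := by
  conv_lhs => rw [h]
  rw [Measure.add_apply, Measure.smul_apply, Measure.smul_apply, smul_eq_mul, smul_eq_mul,
    Measure.map_apply (by fun_prop) hB, Measure.map_apply (by fun_prop) hB]

theorem IsSelfSimilar.measure_Ici_one_eq_zero [IsFiniteMeasure μ] (h : IsSelfSimilar u p μ)
    (hu : u ∈ Ioo 0 1) (hp : 0 < p) (hIoi : μ (Ioi 1) = 0) : μ (Ici 1) = 0 := by
  obtain ⟨hu0, hu1⟩ := hu
  have h0 : (fun x => u + (1 - u) * x) ⁻¹' Ici 1 = Ici 1 := by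
    ext x
    simp only [mem_preimage, mem_Ici]
    constructor <;> intro hx <;> nlinarith
  have h1 : μ ((fun x => u * x) ⁻¹' Ici 1) = 0 :=
    measure_mono_null (fun x (hx : 1 ≤ u * x) => show 1 < x by nlinarith) hIoi
  have hfix := h.measure_eq measurableSet_Ici (B := Ici (1 : ℝ))
  rw [h0, h1, mul_zero, add_zero] at hfix
  by_contra hne
  have : ENNReal.ofReal (1 - p) * μ (Ici 1) < 1 * μ (Ici 1) :=
    ENNReal.mul_lt_mul_left hne (measure_ne_top μ _) (by simpa using hp)
  rw [one_mul] at this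
  exact this.ne hfix.symm

section

variable (h : IsSelfSimilar u p μ) (hu : u ∈ Ioo 0 1) (hIio : μ (Iio 0) = 0)
  (hIci : μ (Ici 1) = 0)
include h hu hIio hIci

theorem IsSelfSimilar.measure_Iio_inter_preimage {A : Set ℝ} (hA : MeasurableSet A) :
    μ (Iio u ∩ expandingMap u ⁻¹' A) = ENNReal.ofReal p * μ A := by
  obtain ⟨hu0, hu1⟩ := hu
  have hS1 : (fun x => u * x) ⁻¹' (Iio u ∩ expandingMap u ⁻¹' A) = A ∩ Iio 1 := by
    ext x
    by_cases hx : x < 1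
    · have hux : u * x < u := by nlinarith
      simp [expandingMap, hux, hx, hu0.ne']
    · have hux : ¬u * x < u := by nlinarith
      simp [hux, hx]
  have hS0 : (fun x => u + (1 - u) * x) ⁻¹' (Iio u ∩ expandingMap u ⁻¹' A) ⊆ Iio 0 :=
    fun x hx => show x < 0 by nlinarith [hx.1.out]
  rw [h.measure_eq (measurableSet_Iio.inter (measurable_expandingMap u hA)), hS1,
    measure_mono_null hS0 hIio, measure_inter_conull (by rwa [compl_Iio]), mul_zero, zero_add]

theorem IsSelfSimilar.measure_Ici_inter_preimage {A : Set ℝ} (hA : MeasurableSet A) :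
    μ (Ici u ∩ expandingMap u ⁻¹' A) = ENNReal.ofReal (1 - p) * μ A := by
  obtain ⟨hu0, hu1⟩ := hu
  have hS0 : (fun x => u + (1 - u) * x) ⁻¹' (Ici u ∩ expandingMap u ⁻¹' A) = A ∩ Ici 0 := by
    ext x
    by_cases hx : 0 ≤ x
    · have hux : 0 ≤ (1 - u) * x := by nlinarith
      simp [expandingMap, hux, hux.not_gt, hx, (sub_pos.2 hu1).ne']
    · have hux : ¬0 ≤ (1 - u) * x := by nlinarith
      simp [hux, hx]
  have hS1 : (fun x => u * x) ⁻¹' (Ici u ∩ expandingMap u ⁻¹' A) ⊆ Ici 1 :=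
    fun x hx => show 1 ≤ x by nlinarith [hx.1.out]
  rw [h.measure_eq (measurableSet_Ici.inter (measurable_expandingMap u hA)), hS0,
    measure_mono_null hS1 hIci, measure_inter_conull (by rwa [compl_Ici]), mul_zero, add_zero]

theorem IsSelfSimilar.measurePreserving_expandingMap (hp : p ∈ Icc 0 1) :
    MeasurePreserving (expandingMap u) μ μ := by
  refine ⟨measurable_expandingMap u, Measure.ext fun A hA => ?_⟩
  rw [Measure.map_apply (measurable_expandingMap u) hA,
    ← measure_inter_add_sdiff (expandingMap u ⁻¹' A) measurableSet_Iio, sdiff_eq, compl_Iio,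
    inter_comm, inter_comm _ (Ici u), h.measure_Iio_inter_preimage hu hIio hIci hA,
    h.measure_Ici_inter_preimage hu hIio hIci hA, ← add_mul,
    ← ENNReal.ofReal_add hp.1 (sub_nonneg.2 hp.2), add_sub_cancel, ENNReal.ofReal_one, one_mul]

end

theorem IsSelfSimilar.ae_tendsto_birkhoffAverage [IsProbabilityMeasure μ]
    (h : IsSelfSimilar u p μ) (hu : u ∈ Ioo 0 1) (hp : p ∈ Ioo 0 1) (hsupp : μ (Icc 0 1)ᶜ = 0) :
    ∀ᵐ x ∂μ, Tendsto (fun n => birkhoffAverage ℝ (expandingMap u) ((Iio u).indicator 1) n x)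
      atTop (𝓝 p) := by
  have hIio : μ (Iio 0) = 0 :=
    measure_mono_null (fun x (hx : x < 0) (hx' : x ∈ Icc 0 1) => hx.not_ge hx'.1) hsupp
  have hIci : μ (Ici 1) = 0 := h.measure_Ici_one_eq_zero hu hp.1
    (measure_mono_null (fun x (hx : 1 < x) (hx' : x ∈ Icc 0 1) => hx.not_ge hx'.2) hsupp)
  have hIio_u : μ (Iio u) = ENNReal.ofReal p := by
    simpa using h.measure_Iio_inter_preimage hu hIio hIci MeasurableSet.univ
  have hT := h.measurePreserving_expandingMap hu hIio hIci (Ioo_subset_Icc_self hp)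
  have := hT.ae_tendsto_birkhoffAverage_indicator measurableSet_Iio fun A hA => by
    rw [h.measure_Iio_inter_preimage hu hIio hIci hA, hIio_u]
  rwa [measureReal_def, hIio_u, ENNReal.toReal_ofReal hp.1.le] at this

theorem isSelfSimilar_volume_restrict_Icc_zero_one (hu : u ∈ Ioo 0 1) :
    IsSelfSimilar u u (volume.restrict (Icc 0 1)) := by
  obtain ⟨hu0, hu1⟩ := hu
  have h1 := Real.map_volume_restrict_Icc_zero_one_affine (a := 0) hu0
  have h0 := Real.map_volume_restrict_Icc_zero_one_affine (a := u) (sub_pos.2 hu1)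
  simp only [zero_add, add_sub_cancel] at h1 h0
  rw [IsSelfSimilar, h0, h1, smul_smul, smul_smul, ← ENNReal.ofReal_mul (sub_pos.2 hu1).le,
    ← ENNReal.ofReal_mul hu0.le, mul_inv_cancel₀ (sub_pos.2 hu1).ne', mul_inv_cancel₀ hu0.ne',
    ENNReal.ofReal_one, one_smul, one_smul, add_comm, ← Measure.restrict_union₀,
    Icc_union_Icc_eq_Icc hu0.le hu1.le]
  · rw [AEDisjoint, Icc_inter_Icc_eq_singleton hu0.le hu1.le, Real.volume_singleton]
  · exact measurableSet_Icc.nullMeasurableSet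

end AffineIFS

/-- for `u ≠ p` the self-similar measure `μ_u` is singular with respect
to Lebesgue measure on `[0,1]`. -/
theorem stmt12 (u p : ℝ) (hu : u ∈ Set.Ioo (0:ℝ) 1) (hp : p ∈ Set.Ioo (0:ℝ) 1)
    (hne : u ≠ p)
    (μ : Measure ℝ) [IsProbabilityMeasure μ] (hsupp : μ (Set.Icc (0:ℝ) 1)ᶜ = 0)
    (hss : μ = ENNReal.ofReal (1 - p) • μ.map (fun x => u + (1 - u) * x)
          + ENNReal.ofReal p • μ.map (fun x => u * x)) :
    μ ⟂ₘ volume.restrict (Set.Icc (0:ℝ) 1) := by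
  have : IsProbabilityMeasure (volume.restrict (Icc (0 : ℝ) 1)) := ⟨by simp⟩
  have hμ := AffineIFS.IsSelfSimilar.ae_tendsto_birkhoffAverage hss hu hp hsupp
  have hLeb :=
    (AffineIFS.isSelfSimilar_volume_restrict_Icc_zero_one hu).ae_tendsto_birkhoffAverage hu hu
      (by simp [Measure.restrict_apply measurableSet_Icc.compl])
  refine Measure.MutuallySingular.mk (ae_iff.1 hμ) (ae_iff.1 hLeb) fun x _ => ?_
  by_contra hx
  simp only [mem_union, mem_ofPred_eq, not_or, not_not] at hx
  exact hne (tendsto_nhds_unique hx.2 hx.1)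
end

section
/- Let $K \ge 1$, let $(p_0,\dots,p_K)$ be a probability vector with all entries strictly positive, and for each $i$ let $S_i(x) = a_i + b_i x$ with $0 \le a_i$, $a_i + b_i \le 1$, $0 \le b_i \le 1$, and not all $b_i = 1$. Let $(B_t)_{t \ge 1}$ be IID with $P(B_1 = i) = p_i$, and let $N_{t,i} = |\{s \le t : B_s = i\}|$. Define $\tilde\Theta_t = \sum_{s=1}^t a_{B_s}\prod_{i=0}^K b_i^{N_{s-1,i}} + \Theta_0 \prod_{i=0}^K b_i^{N_{t,i}}$ for a fixed $\Theta_0 \in [0,1]$. Then $\tilde\Theta_t$ converges almost surely as $t \to \infty$ to $\tilde\Theta_\infty = \sum_{s=1}^\infty a_{B_s}\prod_{i=0}^K b_i^{N_{s-1,i}}$, and $E|\tilde\Theta_t - \tilde\Theta_\infty| \le \rho^t \frac{2-\rho}{1-\rho}$ where $\rho = \sum_{i=0}^K p_i b_i < 1$. -/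
/-!
Write `W_t = ∏_{s<t} b_{B_{s+1}} = ∏ᵢ bᵢ^{N_{t,i}}`. Since `a_j + b_j ≤ 1`, the `s`-th term of the
series is at most `W_s - W_{s+1}`, so the series telescopes: its tail after `t` terms, like `Θ₀ W_t`,
lies in `[0, W_t]`, whence `|Θ̃_t - Θ̃_∞| ≤ W_t`. By independence `E W_t = ρ^t`, which gives the
`L¹` bound, and since `W_t` is nonincreasing with expectations tending to `0`, `W_t → 0` almost
surely.
-/

open MeasureTheory ProbabilityTheory Filter Finset Topology

section Telescoping

variable {u w : ℕ → ℝ}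

theorem sum_range_le_of_le_sub_succ (hw : ∀ s, 0 ≤ w s) (huw : ∀ s, u s ≤ w s - w (s + 1))
    (n : ℕ) : ∑ s ∈ range n, u s ≤ w 0 :=
  calc ∑ s ∈ range n, u s ≤ ∑ s ∈ range n, (w s - w (s + 1)) := sum_le_sum fun s _ => huw s
    _ = w 0 - w n := sum_range_sub' w n
    _ ≤ w 0 := sub_le_self _ (hw n)

theorem summable_of_le_sub_succ (hu : ∀ s, 0 ≤ u s) (hw : ∀ s, 0 ≤ w s)
    (huw : ∀ s, u s ≤ w s - w (s + 1)) : Summable u :=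
  summable_of_sum_range_le hu (sum_range_le_of_le_sub_succ hw huw)

theorem tsum_le_of_le_sub_succ (hu : ∀ s, 0 ≤ u s) (hw : ∀ s, 0 ≤ w s)
    (huw : ∀ s, u s ≤ w s - w (s + 1)) : ∑' s, u s ≤ w 0 :=
  Real.tsum_le_of_sum_range_le hu (sum_range_le_of_le_sub_succ hw huw)

theorem abs_sum_range_add_sub_tsum_le (hu : ∀ s, 0 ≤ u s) (hw : ∀ s, 0 ≤ w s)
    (huw : ∀ s, u s ≤ w s - w (s + 1)) {θ : ℝ} (hθ : θ ∈ Set.Icc (0 : ℝ) 1) (t : ℕ) :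
    |∑ s ∈ range t, u s + θ * w t - ∑' s, u s| ≤ w t := by
  have htail : ∑' s, u (s + t) ≤ w t := by
    simpa using tsum_le_of_le_sub_succ (u := fun s => u (s + t)) (w := fun s => w (s + t))
      (fun s => hu _) (fun s => hw _) (fun s => by simpa [add_right_comm] using huw (s + t))
  rw [← (summable_of_le_sub_succ hu hw huw).sum_add_tsum_nat_add t, add_sub_add_left_eq_sub]
  exact abs_sub_le_of_nonneg_of_le (mul_nonneg hθ.1 (hw t)) (mul_le_of_le_one_left (hw t) hθ.2)
    (tsum_nonneg fun s => hu _) htail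

theorem tendsto_sum_range_add_of_le_sub_succ (hu : ∀ s, 0 ≤ u s) (hw : ∀ s, 0 ≤ w s)
    (huw : ∀ s, u s ≤ w s - w (s + 1)) {θ : ℝ} (hθ : θ ∈ Set.Icc (0 : ℝ) 1)
    (hw_lim : Tendsto w atTop (𝓝 0)) :
    Tendsto (fun t => ∑ s ∈ range t, u s + θ * w t) atTop (𝓝 (∑' s, u s)) :=
  tendsto_iff_norm_sub_tendsto_zero.2 <|
    squeeze_zero (fun _ => norm_nonneg _) (abs_sum_range_add_sub_tsum_le hu hw huw hθ) hw_lim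

end Telescoping

theorem Finset.prod_pow_card_filter_eq_prod {α ι M : Type*} [CommMonoid M] [Fintype ι]
    [DecidableEq ι] (s : Finset α) (g : α → ι) (f : ι → M) :
    ∏ i, f i ^ #{x ∈ s | g x = i} = ∏ x ∈ s, f (g x) := by
  simp_rw [← prod_const]
  exact prod_fiberwise' s g f

theorem sum_mul_lt_one {ι : Type*} [Fintype ι] {p b : ι → ℝ} (hp : ∀ i, 0 < p i)
    (hp_sum : ∑ i, p i = 1) (hb : ∀ i, b i ≤ 1) (hb_lt : ∃ i, b i < 1) : ∑ i, p i * b i < 1 := by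
  obtain ⟨j, hj⟩ := hb_lt
  rw [← hp_sum]
  exact sum_lt_sum (fun i _ => mul_le_of_le_one_right (hp i).le (hb i))
    ⟨j, mem_univ j, mul_lt_of_lt_one_right (hp j) hj⟩

section RandomProduct

variable {Ω : Type*} [MeasurableSpace Ω] {P : Measure Ω}

theorem integral_comp_eq_sum_of_law {ι : Type*} [Fintype ι] [MeasurableSpace ι]
    [MeasurableSingletonClass ι] [IsFiniteMeasure P] {Y : Ω → ι} (hY : Measurable Y)
    {p : ι → ℝ} (hp : ∀ i, 0 ≤ p i) (hlaw : ∀ i, P {ω | Y ω = i} = ENNReal.ofReal (p i))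
    (f : ι → ℝ) : ∫ ω, f (Y ω) ∂P = ∑ i, p i * f i := by
  rw [← integral_map hY.aemeasurable (measurable_of_countable f).aestronglyMeasurable,
    integral_fintype .of_finite]
  refine sum_congr rfl fun i _ => ?_
  rw [measureReal_def, Measure.map_apply hY (measurableSet_singleton i)]
  change (P {ω | Y ω = i}).toReal • f i = _
  rw [hlaw i, ENNReal.toReal_ofReal (hp i), smul_eq_mul]

theorem ProbabilityTheory.iIndepFun.integral_finset_prod {ι : Type*} {X : ι → Ω → ℝ}
    (hX : iIndepFun X P) (hX_meas : ∀ i, AEStronglyMeasurable (X i) P) (s : Finset ι) :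
    ∫ ω, ∏ i ∈ s, X i ω ∂P = ∏ i ∈ s, ∫ ω, X i ω ∂P := by
  rw [← s.prod_coe_sort fun i => ∫ ω, X i ω ∂P]
  simp_rw [← s.prod_coe_sort]
  exact (hX.precomp (g := ((↑) : s → ι)) Subtype.val_injective).integral_fun_prod_eq_prod_integral
    fun i => hX_meas i

variable {X : ℕ → Ω → ℝ}

theorem integral_prod_range_eq_pow (hX : iIndepFun X P)
    (hX_meas : ∀ r, AEStronglyMeasurable (X r) P) {ρ : ℝ} (hρ : ∀ r, ∫ ω, X r ω ∂P = ρ)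
    (t : ℕ) : ∫ ω, ∏ r ∈ range t, X r ω ∂P = ρ ^ t := by
  rw [hX.integral_finset_prod hX_meas, prod_congr rfl fun r _ => hρ r, prod_const, card_range]

theorem antitone_prod_range {x : ℕ → ℝ} (hx0 : ∀ r, 0 ≤ x r) (hx1 : ∀ r, x r ≤ 1) :
    Antitone fun t => ∏ r ∈ range t, x r :=
  antitone_nat_of_succ_le fun t => by
    rw [prod_range_succ]
    exact mul_le_of_le_one_right (prod_nonneg fun r _ => hx0 r) (hx1 t)

theorem integrable_prod_range [IsFiniteMeasure P] (hX_meas : ∀ r, AEStronglyMeasurable (X r) P)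
    (hX0 : ∀ r ω, 0 ≤ X r ω) (hX1 : ∀ r ω, X r ω ≤ 1) (t : ℕ) :
    Integrable (fun ω => ∏ r ∈ range t, X r ω) P :=
  .of_bound (aestronglyMeasurable_fun_prod _ fun r _ => hX_meas r) 1 <| ae_of_all _ fun ω => by
    rw [Real.norm_of_nonneg (prod_nonneg fun r _ => hX0 r ω)]
    exact prod_le_one (fun r _ => hX0 r ω) fun r _ => hX1 r ω

theorem ae_tendsto_prod_range_zero [IsFiniteMeasure P] (hX : iIndepFun X P)
    (hX_meas : ∀ r, AEStronglyMeasurable (X r) P) (hX0 : ∀ r ω, 0 ≤ X r ω)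
    (hX1 : ∀ r ω, X r ω ≤ 1) {ρ : ℝ} (hρ : ∀ r, ∫ ω, X r ω ∂P = ρ) (hρ1 : ρ < 1) :
    ∀ᵐ ω ∂P, Tendsto (fun t => ∏ r ∈ range t, X r ω) atTop (𝓝 0) := by
  have hρ0 : 0 ≤ ρ := hρ 0 ▸ integral_nonneg (hX0 0)
  refine tendsto_of_integral_tendsto_of_antitone (F := 0)
    (integrable_prod_range hX_meas hX0 hX1) (integrable_zero _ _ _) ?_
    (ae_of_all _ fun ω => antitone_prod_range (hX0 · ω) (hX1 · ω))
    (ae_of_all _ fun ω t => prod_nonneg fun r _ => hX0 r ω)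
  simpa only [integral_prod_range_eq_pow hX hX_meas hρ, Pi.zero_apply, integral_zero]
    using tendsto_pow_atTop_nhds_zero_of_lt_one hρ0 hρ1

end RandomProduct

theorem stmt15_general
    {Ω : Type*} [MeasurableSpace Ω] (P : Measure Ω) [IsProbabilityMeasure P]
    (K : ℕ)
    (p a b : Fin (K + 1) → ℝ)
    (hppos : ∀ i, 0 < p i) (hpsum : ∑ i, p i = 1)
    (ha : ∀ i, 0 ≤ a i) (hb : ∀ i, 0 ≤ b i) (hab : ∀ i, a i + b i ≤ 1)
    (hbne : ∃ i, b i < 1)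
    (B : ℕ → Ω → Fin (K + 1)) (hBmeas : ∀ t, Measurable (B t))
    (hBindep : ProbabilityTheory.iIndepFun B P)
    (hBlaw : ∀ t i, P {ω | B t ω = i} = ENNReal.ofReal (p i))
    (Θ₀ : ℝ) (hΘ₀ : Θ₀ ∈ Set.Icc (0:ℝ) 1)
    (N : ℕ → Fin (K + 1) → Ω → ℕ)
    (hN : ∀ t i ω, N t i ω = ((Finset.range t).filter (fun s => B (s + 1) ω = i)).card)
    (Θt : ℕ → Ω → ℝ)
    (hΘt : ∀ t ω, Θt t ω
      = (∑ s ∈ Finset.range t, a (B (s + 1) ω) * ∏ i, b i ^ N s i ω)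
        + Θ₀ * ∏ i, b i ^ N t i ω)
    (Θinf : Ω → ℝ)
    (hΘinf : ∀ ω, Θinf ω = ∑' s : ℕ, a (B (s + 1) ω) * ∏ i, b i ^ N s i ω)
    (ρ : ℝ) (hρ : ρ = ∑ i, p i * b i) :
    ρ < 1 ∧
    (∀ᵐ ω ∂P, Tendsto (fun t => Θt t ω) atTop (nhds (Θinf ω))) ∧
    (∀ t, ∫ ω, |Θt t ω - Θinf ω| ∂P ≤ ρ ^ t * (2 - ρ) / (1 - ρ)) := by
  set X : ℕ → Ω → ℝ := fun r ω => b (B (r + 1) ω)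
  set W : ℕ → Ω → ℝ := fun t ω => ∏ r ∈ range t, X r ω
  have hW : ∀ t ω, ∏ i, b i ^ N t i ω = W t ω := fun t ω => by
    simp only [hN]
    exact prod_pow_card_filter_eq_prod _ _ _
  simp only [hW] at hΘt hΘinf
  have hb1 : ∀ i, b i ≤ 1 := fun i => (le_add_of_nonneg_left (ha i)).trans (hab i)
  have hX_indep : iIndepFun X P :=
    (hBindep.precomp Nat.succ_injective).comp (fun _ => b) fun _ => measurable_of_countable b
  have hX_meas : ∀ r, AEStronglyMeasurable (X r) P := fun r =>
    ((measurable_of_countable b).comp (hBmeas _)).aestronglyMeasurable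
  have hX_mean : ∀ r, ∫ ω, X r ω ∂P = ρ := fun r =>
    hρ ▸ integral_comp_eq_sum_of_law (hBmeas _) (fun i => (hppos i).le) (hBlaw _) b
  have hρ1 : ρ < 1 := hρ ▸ sum_mul_lt_one hppos hpsum hb1 hbne
  have hW_nonneg : ∀ ω s, 0 ≤ W s ω := fun ω s => prod_nonneg fun r _ => hb _
  have hterm_nonneg : ∀ ω s, 0 ≤ a (B (s + 1) ω) * W s ω := fun ω s =>
    mul_nonneg (ha _) (hW_nonneg ω s)
  have hterm_le : ∀ ω s, a (B (s + 1) ω) * W s ω ≤ W s ω - W (s + 1) ω := fun ω s => by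
    rw [show W (s + 1) ω = W s ω * X s ω from prod_range_succ _ _]
    nlinarith [hab (B (s + 1) ω), hW_nonneg ω s]
  refine ⟨hρ1, ?_, fun t => ?_⟩
  · filter_upwards [ae_tendsto_prod_range_zero hX_indep hX_meas (fun _ _ => hb _)
      (fun _ _ => hb1 _) hX_mean hρ1] with ω hω
    simp only [hΘt, hΘinf]
    exact tendsto_sum_range_add_of_le_sub_succ (hterm_nonneg ω) (hW_nonneg ω) (hterm_le ω) hΘ₀ hω
  · have hρ0 : 0 ≤ ρ := hX_mean 0 ▸ integral_nonneg fun _ => hb _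
    calc ∫ ω, |Θt t ω - Θinf ω| ∂P ≤ ∫ ω, W t ω ∂P :=
          integral_mono_of_nonneg (ae_of_all _ fun _ => abs_nonneg _)
            (integrable_prod_range hX_meas (fun _ _ => hb _) (fun _ _ => hb1 _) t)
            (ae_of_all _ fun ω => by
              simpa only [hΘt, hΘinf] using abs_sum_range_add_sub_tsum_le (hterm_nonneg ω)
                (hW_nonneg ω) (hterm_le ω) hΘ₀ t)
      _ = ρ ^ t := integral_prod_range_eq_pow hX_indep hX_meas hX_mean t
      _ ≤ ρ ^ t * (2 - ρ) / (1 - ρ) := by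
          rw [le_div_iff₀ (sub_pos.2 hρ1)]
          exact mul_le_mul_of_nonneg_left (by linarith) (pow_nonneg hρ0 t)

/-- a.s. convergence of `Θ̃_t` to the series `Θ̃_∞` and the `L¹` error
bound `E|Θ̃_t - Θ̃_∞| ≤ ρ^t (2-ρ)/(1-ρ)` with `ρ = ∑ᵢ pᵢ bᵢ < 1`. -/
theorem stmt15
    {Ω : Type*} [MeasurableSpace Ω] (P : Measure Ω) [IsProbabilityMeasure P]
    (K : ℕ) (hK : 1 ≤ K)
    (p a b : Fin (K + 1) → ℝ)
    (hppos : ∀ i, 0 < p i) (hpsum : ∑ i, p i = 1)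
    (ha : ∀ i, 0 ≤ a i) (hb : ∀ i, 0 ≤ b i) (hab : ∀ i, a i + b i ≤ 1)
    (hbne : ∃ i, b i < 1)
    (B : ℕ → Ω → Fin (K + 1)) (hBmeas : ∀ t, Measurable (B t))
    (hBindep : ProbabilityTheory.iIndepFun B P)
    (hBlaw : ∀ t i, P {ω | B t ω = i} = ENNReal.ofReal (p i))
    (Θ₀ : ℝ) (hΘ₀ : Θ₀ ∈ Set.Icc (0:ℝ) 1)
    (N : ℕ → Fin (K + 1) → Ω → ℕ)
    (hN : ∀ t i ω, N t i ω = ((Finset.range t).filter (fun s => B (s + 1) ω = i)).card)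
    (Θt : ℕ → Ω → ℝ)
    (hΘt : ∀ t ω, Θt t ω
      = (∑ s ∈ Finset.range t, a (B (s + 1) ω) * ∏ i, b i ^ N s i ω)
        + Θ₀ * ∏ i, b i ^ N t i ω)
    (Θinf : Ω → ℝ)
    (hΘinf : ∀ ω, Θinf ω = ∑' s : ℕ, a (B (s + 1) ω) * ∏ i, b i ^ N s i ω)
    (ρ : ℝ) (hρ : ρ = ∑ i, p i * b i) :
    ρ < 1 ∧
    (∀ᵐ ω ∂P, Tendsto (fun t => Θt t ω) atTop (nhds (Θinf ω))) ∧
    (∀ t, ∫ ω, |Θt t ω - Θinf ω| ∂P ≤ ρ ^ t * (2 - ρ) / (1 - ρ)) :=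
  stmt15_general P K p a b hppos hpsum ha hb hab hbne B hBmeas hBindep hBlaw Θ₀ hΘ₀ N hN Θt hΘt Θinf
    hΘinf ρ hρ
end

section
/- Let $u, p \in (0,1)$ and let $\nu_u$ be the unique stationary distribution of the IFS $T_0(x) = 1-u+ux$, $T_1(x) = ux$ on $[0,1]$ with probability weights $(1-p, p)$. Then $\nu_u$ equals the distribution of the random series $\frac{1-u}{u}\sum_{k=0}^\infty u^{T_k}$, where $T_k = G_0 + \cdots + G_k$ and $G_0, G_1, \dots$ are IID geometric($1-p$) random variables on $\{1,2,\dots\}$. -/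
open MeasureTheory Set Filter Topology ProbabilityTheory Metric
open scoped ENNReal NNReal

/-!
Let `S j = (1-u)/u * ∑ₖ u ^ (G j + ⋯ + G (j+k))` be the series started at the `j`-th gap, so
that `S 0` is the series of the statement. Peeling off the first gap gives
`S j = u ^ (G j - 1) * T₀ (S (j+1))` with `G j` independent of `S (j+1)`; averaging over the
geometric law of `G j` turns this into `law (S j) = (1-p) T₀(law (S (j+1))) + p T₁(law (S j))`.
This relation only couples consecutive laws, but `T₀` and `T₁` are `u`-contractions and all the
laws live in `[0,1]`, so iterating it `m` times together with the stationarity equation of `ν`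
shows that the integrals of an `L`-Lipschitz function against `ν` and `law (S j)` differ by at
most `L u ^ m`, uniformly in `j`. Hence they agree, and bounded Lipschitz functions determine
a probability measure.
-/

theorem abs_convexComb_sub_le {p : ℝ} (hp : p ∈ Icc 0 1) {a b a' b' ε : ℝ}
    (ha : |a - a'| ≤ ε) (hb : |b - b'| ≤ ε) :
    |(1 - p) * a + p * b - ((1 - p) * a' + p * b')| ≤ ε := by
  rw [show (1 - p) * a + p * b - ((1 - p) * a' + p * b') = (1 - p) * (a - a') + p * (b - b') by
    ring]
  calc _ ≤ (1 - p) * |a - a'| + p * |b - b'| := by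
        grw [abs_add_le, abs_mul, abs_mul, abs_of_nonneg hp.1, abs_of_nonneg (sub_nonneg.2 hp.2)]
    _ ≤ (1 - p) * ε + p * ε := by gcongr <;> linarith [hp.2, hp.1]
    _ = ε := by ring

namespace MeasureTheory.Measure

variable {X : Type*} [MeasurableSpace X]

noncomputable def ifsMix (p : ℝ) (f g : X → X) (ρ₀ ρ₁ : Measure X) : Measure X :=
  ENNReal.ofReal (1 - p) • ρ₀.map f + ENNReal.ofReal p • ρ₁.map g

theorem sum_geometric_smul_map_iterate_eq_ifsMix (p : ℝ) {f g : X → X} (hf : Measurable f)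
    (hg : Measurable g) (ρ : Measure X) :
    let M := Measure.sum fun n =>
      (ENNReal.ofReal (1 - p) * ENNReal.ofReal p ^ n) • ρ.map (g^[n] ∘ f)
    M = ifsMix p f g ρ M := by
  intro M
  have hfg : ∀ n, Measurable (g^[n] ∘ f) := fun n => (hg.iterate n).comp hf
  ext A hA
  simp only [M, ifsMix, add_apply, smul_apply, smul_eq_mul, map_apply hf hA, map_apply hg hA,
    sum_apply _ hA, sum_apply _ (hg hA), map_apply (hfg _) hA, map_apply (hfg _) (hg hA)]
  rw [tsum_eq_zero_add' ENNReal.summable, ← ENNReal.tsum_mul_left]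
  congr 1
  · simp
  · refine tsum_congr fun n => ?_
    rw [← preimage_comp, ← Function.comp_assoc, ← Function.iterate_succ' g, pow_succ]
    ring

section Metric

variable [PseudoMetricSpace X]

theorem abs_integral_sub_le_of_ae_mem_closedBall {ρ : Measure X} [IsProbabilityMeasure ρ]
    {c : X} {r : ℝ} (hρ : ∀ᵐ x ∂ρ, x ∈ closedBall c r) {L : ℝ≥0} {h : X → ℝ}
    (hL : LipschitzWith L h) (hi : Integrable h ρ) : |∫ x, h x ∂ρ - h c| ≤ L * r := by
  have hbound : ∀ᵐ x ∂ρ, ‖h x - h c‖ ≤ L * r := by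
    filter_upwards [hρ] with x hx
    exact (hL.dist_le_mul x c).trans (by gcongr; exact hx)
  simpa [integral_sub hi (integrable_const _)] using norm_integral_le_of_norm_le_const hbound

variable [OpensMeasurableSpace X]

theorem integrable_of_continuous_of_dist_le {ρ : Measure X} [IsFiniteMeasure ρ] {h : X → ℝ}
    (hc : Continuous h) {C : ℝ} (hC : ∀ x y, dist (h x) (h y) ≤ C) : Integrable h ρ :=
  (BoundedContinuousFunction.mkOfBound ⟨h, hc⟩ C hC).integrable ρ

theorem integral_ifsMix {p : ℝ} (hp : p ∈ Icc 0 1) {f g : X → X} (hf : Measurable f)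
    (hg : Measurable g) (ρ₀ ρ₁ : Measure X) [IsFiniteMeasure ρ₀] [IsFiniteMeasure ρ₁]
    {h : X → ℝ} (hc : Continuous h) {C : ℝ} (hC : ∀ x y, dist (h x) (h y) ≤ C) :
    ∫ x, h x ∂(ifsMix p f g ρ₀ ρ₁) = (1 - p) * ∫ x, h (f x) ∂ρ₀ + p * ∫ x, h (g x) ∂ρ₁ := by
  have hi : ∀ (ρ : Measure X) [IsFiniteMeasure ρ] (a : ℝ≥0∞), a ≠ ∞ → Integrable h (a • ρ) :=
    fun ρ _ a ha => (integrable_of_continuous_of_dist_le hc hC).smul_measure ha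
  rw [ifsMix, integral_add_measure (hi _ _ ENNReal.ofReal_ne_top) (hi _ _ ENNReal.ofReal_ne_top),
    integral_smul_measure, integral_smul_measure,
    integral_map hf.aemeasurable hc.aestronglyMeasurable,
    integral_map hg.aemeasurable hc.aestronglyMeasurable,
    ENNReal.toReal_ofReal (sub_nonneg.2 hp.2), ENNReal.toReal_ofReal hp.1, smul_eq_mul, smul_eq_mul]

end Metric

theorem ext_of_forall_lipschitz_integral_eq [PseudoEMetricSpace X] [BorelSpace X]
    {μ ν : Measure X} [IsProbabilityMeasure μ] [IsProbabilityMeasure ν]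
    (h : ∀ f : X → ℝ, (∃ C, ∀ x y, dist (f x) (f y) ≤ C) → (∃ L, LipschitzWith L f) →
      ∫ x, f x ∂μ = ∫ x, f x ∂ν) : μ = ν := by
  let μ' : ProbabilityMeasure X := ⟨μ, inferInstance⟩
  let ν' : ProbabilityMeasure X := ⟨ν, inferInstance⟩
  have : Tendsto (fun _ : ℕ => μ') atTop (𝓝 ν') :=
    tendsto_iff_forall_lipschitz_integral_tendsto.2 fun f hC hL => by
      simpa only [μ', ν', ProbabilityMeasure.coe_mk, h f hC hL] using tendsto_const_nhds
  exact congrArg ProbabilityMeasure.toMeasure (tendsto_nhds_unique tendsto_const_nhds this)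

section Contraction

variable [PseudoMetricSpace X] [BorelSpace X] {p : ℝ} {f g : X → X} {K : ℝ≥0} {c : X} {r : ℝ}
  {ν : Measure X} [IsProbabilityMeasure ν] {μ : ℕ → Measure X} [∀ j, IsProbabilityMeasure (μ j)]

theorem abs_integral_sub_le_of_ifsMix (hp : p ∈ Icc 0 1) (hf : LipschitzWith K f)
    (hg : LipschitzWith K g) (hν : ∀ᵐ x ∂ν, x ∈ closedBall c r) (hνfix : ν = ifsMix p f g ν ν)
    (hμ : ∀ j, ∀ᵐ x ∂μ j, x ∈ closedBall c r)
    (hμrec : ∀ j, μ j = ifsMix p f g (μ (j + 1)) (μ j)) (m : ℕ) :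
    ∀ j {L : ℝ≥0} {h : X → ℝ}, LipschitzWith L h → (∃ C, ∀ x y, dist (h x) (h y) ≤ C) →
      |∫ x, h x ∂ν - ∫ x, h x ∂μ j| ≤ 2 * L * r * K ^ m := by
  induction m with
  | zero =>
    intro j L h hL ⟨C, hC⟩
    have hν' := abs_integral_sub_le_of_ae_mem_closedBall hν hL
      (integrable_of_continuous_of_dist_le hL.continuous hC)
    have hμ' := abs_integral_sub_le_of_ae_mem_closedBall (hμ j) hL
      (integrable_of_continuous_of_dist_le hL.continuous hC)
    calc _ ≤ |∫ x, h x ∂ν - h c| + |h c - ∫ x, h x ∂μ j| := abs_sub_le _ _ _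
      _ ≤ 2 * L * r * K ^ 0 := by rw [abs_sub_comm (h c)]; linarith
  | succ m ih =>
    intro j L h hL ⟨C, hC⟩
    have hCf : ∀ x y, dist (h (f x)) (h (f y)) ≤ C := fun x y => hC _ _
    have hCg : ∀ x y, dist (h (g x)) (h (g y)) ≤ C := fun x y => hC _ _
    rw [hνfix, hμrec j, integral_ifsMix hp hf.continuous.measurable hg.continuous.measurable _ _ hL.continuous hC,
      integral_ifsMix hp hf.continuous.measurable hg.continuous.measurable _ _ hL.continuous hC]
    have hε : 2 * ((L * K : ℝ≥0) : ℝ) * r * K ^ m = 2 * L * r * K ^ (m + 1) := by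
      push_cast; ring
    exact hε ▸ abs_convexComb_sub_le hp (ih (j + 1) (hL.comp hf) ⟨C, hCf⟩)
      (ih j (hL.comp hg) ⟨C, hCg⟩)

theorem eq_of_ifsMix_of_lipschitz (hp : p ∈ Icc 0 1) (hf : LipschitzWith K f)
    (hg : LipschitzWith K g) (hK : K < 1) (hν : ∀ᵐ x ∂ν, x ∈ closedBall c r)
    (hνfix : ν = ifsMix p f g ν ν) (hμ : ∀ j, ∀ᵐ x ∂μ j, x ∈ closedBall c r)
    (hμrec : ∀ j, μ j = ifsMix p f g (μ (j + 1)) (μ j)) : ν = μ 0 := by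
  refine ext_of_forall_lipschitz_integral_eq fun h hb ⟨L, hL⟩ => ?_
  have hlim : Tendsto (fun m : ℕ => 2 * L * r * (K : ℝ) ^ m) atTop (𝓝 0) := by
    simpa using (tendsto_pow_atTop_nhds_zero_of_lt_one K.coe_nonneg hK).const_mul (2 * L * r)
  have hle : |∫ x, h x ∂ν - ∫ x, h x ∂μ 0| ≤ 0 := ge_of_tendsto hlim <| .of_forall fun m =>
    abs_integral_sub_le_of_ifsMix hp hf hg hν hνfix hμ hμrec m 0 hL hb
  exact sub_eq_zero.1 (abs_nonpos_iff.1 hle)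

end Contraction

end MeasureTheory.Measure

noncomputable def gapSeries (u : ℝ) (g : ℕ → ℕ) : ℝ :=
  (1 - u) / u * ∑' k, u ^ ∑ i ∈ Finset.range (k + 1), g i

namespace gapSeries

variable {u : ℝ} {g : ℕ → ℕ}

theorem pow_sum_range_le (hu₀ : 0 ≤ u) (hu₁ : u ≤ 1) (hg : ∀ i, 1 ≤ g i) (k : ℕ) :
    u ^ ∑ i ∈ Finset.range (k + 1), g i ≤ u ^ (k + 1) :=
  pow_le_pow_of_le_one hu₀ hu₁ <| by
    simpa using Finset.card_nsmul_le_sum (Finset.range (k + 1)) g 1 fun i _ => hg i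

theorem summable (hu₀ : 0 ≤ u) (hu₁ : u < 1) (hg : ∀ i, 1 ≤ g i) :
    Summable fun k => u ^ ∑ i ∈ Finset.range (k + 1), g i :=
  .of_nonneg_of_le (fun _ => pow_nonneg hu₀ _) (pow_sum_range_le hu₀ hu₁.le hg)
    ((summable_nat_add_iff 1).2 (summable_geometric_of_lt_one hu₀ hu₁))

theorem mem_Icc (hu : u ∈ Ioo 0 1) (hg : ∀ i, 1 ≤ g i) : gapSeries u g ∈ Icc 0 1 := by
  obtain ⟨hu₀, hu₁⟩ := hu
  have hc : 0 ≤ (1 - u) / u := div_nonneg (by linarith) hu₀.le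
  refine ⟨mul_nonneg hc (tsum_nonneg fun _ => pow_nonneg hu₀.le _), ?_⟩
  have hgeom : ∑' k : ℕ, u ^ (k + 1) = u / (1 - u) := by
    simp_rw [pow_succ']
    rw [tsum_mul_left, tsum_geometric_of_lt_one hu₀.le hu₁, div_eq_mul_inv]
  calc gapSeries u g ≤ (1 - u) / u * (u / (1 - u)) := by
        rw [gapSeries, ← hgeom]
        exact mul_le_mul_of_nonneg_left (Summable.tsum_le_tsum (pow_sum_range_le hu₀.le hu₁.le hg)
          (summable hu₀.le hu₁ hg)
          ((summable_nat_add_iff 1).2 (summable_geometric_of_lt_one hu₀.le hu₁))) hc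
    _ = 1 := by field_simp [(by linarith : 1 - u ≠ 0)]

theorem eq_iterate (hu : u ∈ Ioo 0 1) (hg : ∀ i, 1 ≤ g i) :
    gapSeries u g = (u * ·)^[g 0 - 1] (1 - u + u * gapSeries u fun i => g (i + 1)) := by
  obtain ⟨hu₀, hu₁⟩ := hu
  have hshift : ∀ k, u ^ ∑ i ∈ Finset.range (k + 1 + 1), g i
      = u ^ g 0 * u ^ ∑ i ∈ Finset.range (k + 1), g (i + 1) := fun k => by
    rw [Finset.sum_range_succ', ← pow_add, add_comm]
  have hg₀ : u ^ g 0 = u * u ^ (g 0 - 1) := by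
    rw [← pow_succ', Nat.sub_add_cancel (hg 0)]
  rw [mul_left_iterate, gapSeries, gapSeries, (summable hu₀.le hu₁ hg).tsum_eq_zero_add,
    tsum_congr hshift, tsum_mul_left, zero_add, Finset.sum_range_one, hg₀]
  field_simp

theorem measurable (u : ℝ) : Measurable (gapSeries u) :=
  (Measurable.tsum fun _ => measurable_from_nat.comp
    (Finset.measurable_sum _ fun i _ => measurable_pi_apply i)).const_mul _

end gapSeries

section Probability

variable {Ω : Type*} [MeasurableSpace Ω] {P : Measure Ω}

theorem ENNReal.tsum_ofReal_one_sub_mul_ofReal_pow {p : ℝ} (hp : p ∈ Ico 0 1) :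
    ∑' n : ℕ, ENNReal.ofReal (1 - p) * ENNReal.ofReal p ^ n = 1 := by
  have hsub : 1 - ENNReal.ofReal p = ENNReal.ofReal (1 - p) := by
    rw [ENNReal.ofReal_sub _ hp.1, ENNReal.ofReal_one]
  rw [ENNReal.tsum_mul_left, ENNReal.tsum_geometric, hsub,
    ENNReal.mul_inv_cancel (by simpa using hp.2) ENNReal.ofReal_ne_top]

theorem measure_preimage_zero_eq_zero [IsProbabilityMeasure P] {N : Ω → ℕ} (hN : Measurable N)
    (h : ∑' n, P (N ⁻¹' {n + 1}) = 1) : P (N ⁻¹' {0}) = 0 := by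
  have htotal : ∑' n, P (N ⁻¹' {n}) = 1 := by
    rw [← measure_iUnion (fun m n hmn => (disjoint_singleton.2 hmn).preimage N)
      (fun n => hN (measurableSet_singleton n)), ← preimage_iUnion, iUnion_singleton_eq_range,
      range_id', preimage_univ, measure_univ]
  rw [tsum_eq_zero_add' ENNReal.summable, h] at htotal
  simpa using htotal

theorem measure_preimage_sub_one (N : Ω → ℕ) (h₀ : P (N ⁻¹' {0}) = 0) (n : ℕ) :
    P ((fun ω => N ω - 1) ⁻¹' {n}) = P (N ⁻¹' {n + 1}) := by
  refine le_antisymm ?_ (measure_mono fun ω hω => by simp_all)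
  calc P ((fun ω => N ω - 1) ⁻¹' {n}) ≤ P (N ⁻¹' {n + 1} ∪ N ⁻¹' {0}) :=
        measure_mono fun ω hω => by
          simp only [mem_preimage, mem_singleton_iff, mem_union] at *; omega
    _ ≤ P (N ⁻¹' {n + 1}) + P (N ⁻¹' {0}) := measure_union_le _ _
    _ = P (N ⁻¹' {n + 1}) := by rw [h₀, add_zero]

theorem ProbabilityTheory.iIndepFun.indepFun_tail {β : Type*} [MeasurableSpace β]
    {G : ℕ → Ω → β} (h : iIndepFun G P) (hG : ∀ i, Measurable (G i)) (j : ℕ) :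
    IndepFun (G j) (fun ω i => G (j + 1 + i) ω) P := by
  let m : ℕ → MeasurableSpace Ω := fun i => MeasurableSpace.comap (G i) inferInstance
  have hind := indep_iSup_of_disjoint (fun i => (hG i).comap_le) h.iIndep
    (S := {j}) (T := {i | j < i}) (by simp)
  rw [IndepFun_iff_Indep]
  refine indep_of_indep_of_le_right (indep_of_indep_of_le_left hind ?_) ?_
  · exact le_iSup₂ (f := fun i (_ : i ∈ ({j} : Set ℕ)) => m i) j rfl
  · rw [MeasurableSpace.pi, MeasurableSpace.comap_iSup]
    refine iSup_le fun i => ?_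
    rw [MeasurableSpace.comap_comp]
    exact le_iSup₂ (f := fun i (_ : i ∈ {i | j < i}) => m i) (j + 1 + i) (by simp; omega)

theorem map_eq_sum_smul_map_of_indepFun {β γ : Type*} [MeasurableSpace β] [MeasurableSpace γ]
    {N : Ω → ℕ} {X : Ω → β} (hN : Measurable N) (hX : Measurable X) (hind : IndepFun N X P)
    {f : ℕ → β → γ} (hf : ∀ n, Measurable (f n)) :
    P.map (fun ω => f (N ω) (X ω)) = Measure.sum fun n => P (N ⁻¹' {n}) • (P.map X).map (f n) := by
  have hY : Measurable fun ω => f (N ω) (X ω) :=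
    (measurable_from_prod_countable_right (f := Function.uncurry f) hf).comp (hN.prodMk hX)
  ext A hA
  have hpartition : (fun ω => f (N ω) (X ω)) ⁻¹' A = ⋃ n, N ⁻¹' {n} ∩ X ⁻¹' (f n ⁻¹' A) := by
    ext ω; simp
  rw [Measure.map_apply hY hA, Measure.sum_apply _ hA, hpartition,
    measure_iUnion (fun m n hmn => ((disjoint_singleton.2 hmn).preimage N).mono
      inter_subset_left inter_subset_left) fun n => (hN (measurableSet_singleton n)).inter
      (hX (hf n hA))]
  refine tsum_congr fun n => ?_
  rw [Measure.smul_apply, Measure.map_apply (hf n) hA, Measure.map_apply hX (hf n hA), smul_eq_mul,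
    hind.measure_inter_preimage_eq_mul _ _ (measurableSet_singleton n) (hf n hA)]

end Probability

section GapSeriesLaw

variable {Ω : Type*} [MeasurableSpace Ω] {P : Measure Ω} {u : ℝ} {G : ℕ → Ω → ℕ}

noncomputable def shiftedGapSeries (u : ℝ) (G : ℕ → Ω → ℕ) (j : ℕ) (ω : Ω) : ℝ :=
  gapSeries u fun i => G (j + i) ω

theorem measurable_shiftedGapSeries (hG : ∀ i, Measurable (G i)) (j : ℕ) :
    Measurable (shiftedGapSeries u G j) :=
  (gapSeries.measurable u).comp (measurable_pi_lambda _ fun i => hG (j + i))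

theorem ae_forall_one_le (h₀ : ∀ i, P (G i ⁻¹' {0}) = 0) : ∀ᵐ ω ∂P, ∀ i, 1 ≤ G i ω :=
  ae_all_iff.2 fun i => (measure_eq_zero_iff_ae_notMem.1 (h₀ i)).mono fun _ hω =>
    Nat.one_le_iff_ne_zero.2 hω

theorem ae_map_shiftedGapSeries_mem_Icc (hu : u ∈ Ioo 0 1) (hG : ∀ i, Measurable (G i))
    (h₀ : ∀ i, P (G i ⁻¹' {0}) = 0) (j : ℕ) :
    ∀ᵐ x ∂P.map (shiftedGapSeries u G j), x ∈ Icc 0 1 :=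
  (ae_map_iff (measurable_shiftedGapSeries hG j).aemeasurable measurableSet_Icc).2 <|
    (ae_forall_one_le h₀).mono fun _ hω => gapSeries.mem_Icc hu fun i => hω (j + i)

theorem ae_shiftedGapSeries_eq_iterate (hu : u ∈ Ioo 0 1) (h₀ : ∀ i, P (G i ⁻¹' {0}) = 0)
    (j : ℕ) : ∀ᵐ ω ∂P, shiftedGapSeries u G j ω
      = (u * ·)^[G j ω - 1] (1 - u + u * shiftedGapSeries u G (j + 1) ω) :=
  (ae_forall_one_le h₀).mono fun ω hω => by
    rw [shiftedGapSeries, gapSeries.eq_iterate hu fun i => hω (j + i)]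
    simp only [shiftedGapSeries, add_zero, add_right_comm j, add_assoc]

theorem map_shiftedGapSeries_eq_ifsMix (hu : u ∈ Ioo 0 1) {p : ℝ} (hG : ∀ i, Measurable (G i))
    (hind : iIndepFun G P)
    (hgeom : ∀ i n, P (G i ⁻¹' {n + 1}) = ENNReal.ofReal (1 - p) * ENNReal.ofReal p ^ n)
    (h₀ : ∀ i, P (G i ⁻¹' {0}) = 0) (j : ℕ) :
    P.map (shiftedGapSeries u G j) = Measure.ifsMix p (fun x => 1 - u + u * x) (fun x => u * x)
      (P.map (shiftedGapSeries u G (j + 1))) (P.map (shiftedGapSeries u G j)) := by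
  have hT₀ : Measurable fun x : ℝ => 1 - u + u * x := by fun_prop
  have hT₁ : Measurable fun x : ℝ => u * x := by fun_prop
  have hlaw : P.map (shiftedGapSeries u G j) = Measure.sum fun n =>
      (ENNReal.ofReal (1 - p) * ENNReal.ofReal p ^ n) •
        (P.map (shiftedGapSeries u G (j + 1))).map ((u * ·)^[n] ∘ fun x => 1 - u + u * x) := by
    rw [Measure.map_congr (ae_shiftedGapSeries_eq_iterate hu h₀ j)]
    refine (map_eq_sum_smul_map_of_indepFun (N := fun ω => G j ω - 1)
      (X := shiftedGapSeries u G (j + 1)) ((measurable_from_nat (f := fun n => n - 1)).comp (hG j))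
      (measurable_shiftedGapSeries hG (j + 1))
      ((hind.indepFun_tail hG j).comp (φ := fun n => n - 1) measurable_from_nat
        (gapSeries.measurable u))
      (f := fun n => (u * ·)^[n] ∘ fun x => 1 - u + u * x)
      fun n => (hT₁.iterate n).comp hT₀).trans ?_
    simp_rw [measure_preimage_sub_one _ (h₀ j), hgeom]
  rw [hlaw]
  exact Measure.sum_geometric_smul_map_iterate_eq_ifsMix p hT₀ hT₁ _

end GapSeriesLaw

/-- the unique stationary distribution `ν_u` of the IFS
`T₀ x = 1-u+ux`, `T₁ x = ux` with weights `(1-p, p)` is the distribution of the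
random series `((1-u)/u) ∑_k u^{T_k}`, where `T_k` are partial sums of IID
geometric(1-p) random variables. -/
theorem stmt17
    {Ω : Type*} [MeasurableSpace Ω] (P : Measure Ω) [IsProbabilityMeasure P]
    (u p : ℝ) (hu : u ∈ Set.Ioo (0:ℝ) 1) (hp : p ∈ Set.Ioo (0:ℝ) 1)
    (G : ℕ → Ω → ℕ) (hmeas : ∀ i, Measurable (G i))
    (hindep : ProbabilityTheory.iIndepFun G P)
    (hgeom : ∀ i n, 1 ≤ n → P {ω | G i ω = n} = ENNReal.ofReal (p ^ (n - 1) * (1 - p)))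
    (T : ℕ → Ω → ℕ) (hT : ∀ k ω, T k ω = ∑ i ∈ Finset.range (k + 1), G i ω)
    (ν : Measure ℝ) [IsProbabilityMeasure ν] (hsupp : ν (Set.Icc (0:ℝ) 1)ᶜ = 0)
    (hss : ν = ENNReal.ofReal (1 - p) • ν.map (fun x => 1 - u + u * x)
          + ENNReal.ofReal p • ν.map (fun x => u * x)) :
    ν = P.map (fun ω => (1 - u) / u * ∑' k, u ^ (T k ω)) := by
  have hgeom' : ∀ i n, P (G i ⁻¹' {n + 1}) = ENNReal.ofReal (1 - p) * ENNReal.ofReal p ^ n := by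
    intro i n
    rw [← ENNReal.ofReal_pow hp.1.le, ← ENNReal.ofReal_mul (sub_nonneg.2 hp.2.le), mul_comm]
    exact hgeom i (n + 1) (Nat.le_add_left 1 n)
  have h₀ : ∀ i, P (G i ⁻¹' {0}) = 0 := fun i => measure_preimage_zero_eq_zero (hmeas i) <| by
    simp_rw [hgeom' i]; exact ENNReal.tsum_ofReal_one_sub_mul_ofReal_pow ⟨hp.1.le, hp.2⟩
  have hball : Icc (0 : ℝ) 1 = closedBall (1 / 2) (1 / 2) := by
    rw [Real.closedBall_eq_Icc]; norm_num
  have hT₀ : LipschitzWith ‖u‖₊ fun x : ℝ => 1 - u + u * x :=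
    .of_dist_le_mul fun x y => by simp [Real.dist_eq, ← mul_sub, abs_mul]
  have hK : ‖u‖₊ < 1 := by
    rw [← NNReal.coe_lt_coe, coe_nnnorm, Real.norm_of_nonneg hu.1.le]; exact hu.2
  have : ∀ j, IsProbabilityMeasure (P.map (shiftedGapSeries u G j)) := fun j =>
    Measure.isProbabilityMeasure_map (measurable_shiftedGapSeries hmeas j).aemeasurable
  rw [Measure.eq_of_ifsMix_of_lipschitz (μ := fun j => P.map (shiftedGapSeries u G j))
    ⟨hp.1.le, hp.2.le⟩ hT₀ (lipschitzWith_smul u) hK (hball ▸ mem_ae_iff.2 hsupp) hss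
    (fun j => hball ▸ ae_map_shiftedGapSeries_mem_Icc hu hmeas h₀ j)
    (map_shiftedGapSeries_eq_ifsMix hu hmeas hindep hgeom' h₀)]
  congr 1
  ext ω
  simp only [shiftedGapSeries, gapSeries, hT, zero_add]
end
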